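/- Let ψ ∈ ℝ[[z]] have zero constant term and let ψ_e denote its even part. If ψ = z·(ψ + 1)²·(ψ_e + 1) as formal power series, then (ψ_e + 1)² = 1 + 4z²·(ψ_e + 1)⁶. -/

import Mathlib

open Finset
open scoped Classical

/-- `P` is a set partition of `{1,…,n}` (modelled on `Fin n`): a collection of nonempty
blocks such that every element belongs to exactly one block. -/
def IsPartitionOf (n : ℕ) (P : Finset (Finset (Fin n))) : Prop :=
  (∀ B ∈ P, B.Nonempty) ∧ ∀ s : Fin n, ∃! B, B ∈ P ∧ s ∈ B

/-- `a` and `b` lie in a common block of `P`. -/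
def SameBlock {n : ℕ} (P : Finset (Finset (Fin n))) (a b : Fin n) : Prop :=
  ∃ B ∈ P, a ∈ B ∧ b ∈ B

/-- A partition is noncrossing if there are no `a < b < c < d` with `a, c` in one block
and `b, d` in another, distinct block. -/
def IsNoncrossing {n : ℕ} (P : Finset (Finset (Fin n))) : Prop :=
  ∀ a b c d : Fin n, a < b → b < c → c < d →
    SameBlock P a c → SameBlock P b d → SameBlock P a b

/-- A perfect matching (pair partition): a partition all of whose blocks have two elements. -/
def IsPairPartition (n : ℕ) (P : Finset (Finset (Fin n))) : Prop :=
  IsPartitionOf n P ∧ ∀ B ∈ P, B.card = 2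

/-- The block of `P` containing `s`. -/
noncomputable def theBlock {n : ℕ} (P : Finset (Finset (Fin n))) (s : Fin n) :
    Finset (Fin n) :=
  univ.filter (fun t => SameBlock P s t)

/-- The cycle permutation `σ_π` of a partition: on a block `{s₁ < s₂ < … < s_m}` it sends
`s_i` to `s_{i+1}` for `i < m` and sends `s_m` back to `s₁`. -/
noncomputable def cyclePerm {n : ℕ} (P : Finset (Finset (Fin n))) (s : Fin n) : Fin n :=
  if h : ((theBlock P s).filter (fun t => s < t)).Nonempty then
    ((theBlock P s).filter (fun t => s < t)).min' h
  else if h' : (theBlock P s).Nonempty then (theBlock P s).min' h' else s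

/-- The 1-based value of `s : Fin n`, i.e. the corresponding element of `{1,…,n}`. -/
def val1 {n : ℕ} (s : Fin n) : ℕ := s.val + 1

/-- The residue in `{1,…,m}` of the (1-based) element corresponding to `s : Fin n`. -/
def res {n : ℕ} (s : Fin n) (m : ℕ) : ℕ := s.val % m + 1

/-- The map `α`, sending a partition `π` of `{1,…,n}` to the collection of pairs
`{2s, 2σ_π(s) − 1}`, `s ∈ {1,…,n}` (in 0-based indexing, `2s ↦ 2s+1` and
`2σ_π(s)−1 ↦ 2⬝(σ_π(s))`). -/
noncomputable def alphaMap {n : ℕ} (P : Finset (Finset (Fin n))) :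
    Finset (Finset (Fin (2*n))) :=
  (univ : Finset (Fin n)).image fun s =>
    ({⟨2 * s.val + 1, by have := s.isLt; omega⟩,
      ⟨2 * (cyclePerm P s).val, by have := (cyclePerm P s).isLt; omega⟩} :
      Finset (Fin (2*n)))

/-- Substitution `Σ_{i≥0} t_i g^i` of a power series with zero constant term into the
series with coefficient sequence `t`; the `m`-th coefficient only involves `i ≤ m`. -/
noncomputable def substSeries (t : ℕ → ℝ) (g : PowerSeries ℝ) : PowerSeries ℝ :=
  PowerSeries.mk fun m =>
    ∑ i ∈ Finset.range (m+1), t i * (PowerSeries.coeff m) (g ^ i)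

/-- The even part `Σ a_{2n} z^{2n}` of a formal power series `Σ a_n z^n`. -/
noncomputable def evenPart (f : PowerSeries ℝ) : PowerSeries ℝ :=
  PowerSeries.mk fun n => if Even n then PowerSeries.coeff n f else 0

/-! Write `A = ψ + 1`, `B = ψ(-z) + 1` and `E = ψ_e + 1`, so that `A + B = 2E`. The hypothesis
and its image under `z ↦ -z` (which fixes `ψ_e`) give `A - 1 = zA²E` and `B - 1 = -zB²E`.
Subtracting these yields `A - B = zE(A² + B²)`, and adding them yields `E - 1 = zE²(A - B)`;
eliminating `A - B` with `A² + B² = ((A + B)² + (A - B)²)/2` leaves `E² - 1 = 4z²E⁶`. -/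

namespace PowerSeries

theorem rescale_neg_one_evenPart (f : PowerSeries ℝ) :
    rescale (-1) (evenPart f) = evenPart f := by
  ext n
  rw [coeff_rescale]
  simp only [evenPart, coeff_mk]
  rcases Nat.even_or_odd n with hn | hn
  · simp [hn, hn.neg_one_pow]
  · simp [Nat.not_even_iff_odd.mpr hn]

theorem add_rescale_neg_one_eq_two_mul_evenPart (f : PowerSeries ℝ) :
    f + rescale (-1) f = 2 * evenPart f := by
  ext n
  rw [map_add, coeff_rescale, two_mul, map_add]
  simp only [evenPart, coeff_mk]
  rcases Nat.even_or_odd n with hn | hn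
  · simp [hn, hn.neg_one_pow]
  · simp [Nat.not_even_iff_odd.mpr hn, hn.neg_one_pow]

end PowerSeries

theorem sq_eq_one_add_of_sub_one_eq {R : Type*} [CommRing R] (h2 : IsLeftRegular (2 : R))
    {x A B E : R} (hA : A - 1 = x * A ^ 2 * E) (hB : B - 1 = -(x * B ^ 2 * E))
    (hE : A + B = 2 * E) :
    E ^ 2 = 1 + 4 * x ^ 2 * E ^ 6 := by
  have hdiff : A - B = x * E * (A ^ 2 + B ^ 2) := by linear_combination hA - hB
  have hmean : E - 1 = x * E ^ 2 * (A - B) :=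
    h2 (by linear_combination hA + hB + (x * E * (A - B) - 1) * hE)
  have hdiff' : 2 * (A - B) = x * E * (4 * E ^ 2 + (A - B) ^ 2) := by
    linear_combination 2 * hdiff + x * E * (A + B + 2 * E) * hE
  linear_combination (1 + E - x * E ^ 2 * (A - B)) * hmean + x * E ^ 3 * hdiff'

open PowerSeries in
theorem statement12_general (ψ : PowerSeries ℝ)
    (heq : ψ = PowerSeries.X * (ψ + 1) ^ 2 * (evenPart ψ + 1)) :
    (evenPart ψ + 1) ^ 2 = 1 + 4 * PowerSeries.X ^ 2 * (evenPart ψ + 1) ^ 6 := by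
  have h2 : IsLeftRegular (2 : PowerSeries ℝ) :=
    (isUnit_iff_constantCoeff.mpr (by rw [map_ofNat]; norm_num)).isRegular.left
  have hneg : rescale (-1) ψ = -(X * (rescale (-1) ψ + 1) ^ 2 * (evenPart ψ + 1)) := by
    conv_lhs => rw [heq]
    simp [rescale_neg_one_evenPart]
  refine sq_eq_one_add_of_sub_one_eq h2 (A := ψ + 1) (B := rescale (-1) ψ + 1) ?_ ?_ ?_
  · linear_combination heq
  · linear_combination hneg
  · linear_combination add_rescale_neg_one_eq_two_mul_evenPart ψ

/-- Example 7.2, key computation. If `ψ` has zero constant term and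
`ψ = z·(ψ+1)²·(ψ_e+1)`, where `ψ_e` is the even part of `ψ`, then
`(ψ_e+1)² = 1 + 4z²·(ψ_e+1)⁶`. -/
theorem statement12 (ψ : PowerSeries ℝ) (h0 : PowerSeries.constantCoeff ψ = 0)
    (heq : ψ = PowerSeries.X * (ψ + 1) ^ 2 * (evenPart ψ + 1)) :
    (evenPart ψ + 1) ^ 2 = 1 + 4 * PowerSeries.X ^ 2 * (evenPart ψ + 1) ^ 6 :=
  statement12_general ψ heq
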